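/- arXiv:1607.02983 — 3 statements merged into one kernel-verified Lean document; each statement's English description precedes it below -/
import Mathlib

section
/- Under the constraint b_n = −q^{2j_n−1}a_n for all n, the reference covector ⟨Ω| and reference vector |Ω̄⟩ satisfy, for all λ ∈ ℂˣ: ⟨Ω|A(λq^{1/2}) = a(λ)⟨Ω|, ⟨Ω|D(λq^{1/2}) = d(λ)⟨Ω|, ⟨Ω|B(λ) = 0; and A(λq^{1/2})|Ω̄⟩ = a(λq)|Ω̄⟩, D(λq^{1/2})|Ω̄⟩ = d(λ/q)|Ω̄⟩, B(λ)|Ω̄⟩ = 0; where a(λ) = ∏_{n=1}^N (λq^{j_n−1}α_n − β_n q^{1−j_n}λ^{−1}) and d(λ) = ∏_{n=1}^N (γ_n q^{j_n−1}λ^{−1} − λ q^{1−j_n}δ_n). -/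
open Matrix Polynomial Filter Topology

noncomputable section

namespace SixV

/-- the local space index set `ℤ/(2l+1)ℤ` -/
abbrev Zp (l : ℕ) := ZMod (2 * l + 1)

/-- index set of the quantum space `H = (ℂ^p)^{⊗N}` -/
abbrev HIdx (l N : ℕ) := Fin N → Zp l

/-- operators on the quantum space `H` -/
abbrev Op (l N : ℕ) := Matrix (HIdx l N) (HIdx l N) ℂ

/-- clock matrix `v`, `v|k⟩ = q^k |k⟩` -/
def vM (l : ℕ) (q : ℂ) : Matrix (Zp l) (Zp l) ℂ := Matrix.diagonal fun k => q ^ k.val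

def vMinv (l : ℕ) (q : ℂ) : Matrix (Zp l) (Zp l) ℂ := Matrix.diagonal fun k => (q ^ k.val)⁻¹

/-- shift matrix `u`, `u|k⟩ = |k-1⟩` -/
def uM (l : ℕ) : Matrix (Zp l) (Zp l) ℂ := Matrix.of fun j k => if j = k - 1 then (1 : ℂ) else 0

def uMinv (l : ℕ) : Matrix (Zp l) (Zp l) ℂ := Matrix.of fun j k => if j = k + 1 then (1 : ℂ) else 0

/-- the Bazhanov-Stroganov Lax operator, a `2×2` matrix of `p×p` matrices;
`s` denotes the fixed square root `q^{1/2}` of `q`. -/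
def laxM (l : ℕ) (q s pα pβ pa pb pc pd lam : ℂ) :
    Matrix (Fin 2) (Fin 2) (Matrix (Zp l) (Zp l) ℂ) :=
  Matrix.of
    ![![(lam * pα) • vM l q - (pβ / lam) • vMinv l q,
        uM l * ((pa / s) • vM l q + (s * pb) • vMinv l q)],
      ![uMinv l * ((s * pc) • vM l q + (pd / s) • vMinv l q),
        (pa * pc / pα / lam) • vM l q - (pb * pd / pβ * lam) • vMinv l q]]

/-- the bulk parameters `α_n, β_n, a_n, b_n, c_n, d_n` of the `N`-site chain -/
structure BulkParams (N : ℕ) where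
  α : Fin N → ℂ
  β : Fin N → ℂ
  a : Fin N → ℂ
  b : Fin N → ℂ
  c : Fin N → ℂ
  d : Fin N → ℂ

def BulkParams.NonZero {N : ℕ} (P : BulkParams N) : Prop :=
  ∀ n, P.α n ≠ 0 ∧ P.β n ≠ 0 ∧ P.a n ≠ 0 ∧ P.b n ≠ 0 ∧ P.c n ≠ 0 ∧ P.d n ≠ 0

/-- embedding of a one-site operator at site `n` of the chain -/
def site (l N : ℕ) (n : Fin N) (A : Matrix (Zp l) (Zp l) ℂ) : Op l N :=
  Matrix.of fun x y =>
    A (x n) (y n) * ∏ m ∈ Finset.univ.erase n, (if x m = y m then (1 : ℂ) else 0)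

def laxSite (l N : ℕ) (q s : ℂ) (P : BulkParams N) (n : Fin N) (lam : ℂ) :
    Matrix (Fin 2) (Fin 2) (Op l N) :=
  Matrix.of fun i j =>
    site l N n (laxM l q s (P.α n) (P.β n) (P.a n) (P.b n) (P.c n) (P.d n) lam i j)

/-- bulk monodromy matrix `M(λ) = L_N(λ q^{-1/2}) ⋯ L_1(λ q^{-1/2})` -/
def mono (l N : ℕ) (q s : ℂ) (P : BulkParams N) (lam : ℂ) :
    Matrix (Fin 2) (Fin 2) (Op l N) :=
  (((List.finRange N).reverse).map fun n => laxSite l N q s P n (lam / s)).prod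

/-- boundary parameters `(ζ, κ, τ)` -/
structure Bdry where
  ζ : ℂ
  κ : ℂ
  τ : ℂ

/-- the general scalar solution `K(λ; ζ, κ, τ)` of the reflection equation -/
def kM (q s : ℂ) (B : Bdry) (lam : ℂ) : Matrix (Fin 2) (Fin 2) ℂ :=
  (B.ζ - B.ζ⁻¹)⁻¹ •
    Matrix.of
      ![![lam * B.ζ / s - s / (lam * B.ζ), B.κ * Complex.exp B.τ * (lam ^ 2 / q - q / lam ^ 2)],
        ![B.κ * Complex.exp (-B.τ) * (lam ^ 2 / q - q / lam ^ 2),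
          s * B.ζ / lam - lam / (B.ζ * s)]]

/-- lift of a scalar `2×2` matrix to a `2×2` matrix of operators on `H` -/
def lift2 (l N : ℕ) (K : Matrix (Fin 2) (Fin 2) ℂ) : Matrix (Fin 2) (Fin 2) (Op l N) :=
  Matrix.of fun i j => K i j • (1 : Op l N)

/-- the Pauli matrix `σ^y` acting on the auxiliary space -/
def sigY (l N : ℕ) : Matrix (Fin 2) (Fin 2) (Op l N) :=
  Matrix.of ![![0, (-Complex.I) • (1 : Op l N)], ![Complex.I • (1 : Op l N), 0]]

/-- `M̂(λ) = (-1)^N σ^y M(1/λ)^{t_a} σ^y` (transposition in the auxiliary indices only) -/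
def mHat (l N : ℕ) (q s : ℂ) (P : BulkParams N) (lam : ℂ) :
    Matrix (Fin 2) (Fin 2) (Op l N) :=
  ((-1 : ℂ) ^ N) • (sigY l N * (mono l N q s P lam⁻¹).transpose * sigY l N)

/-- the boundary monodromy matrix `U_-(λ) = M(λ) K_-(λ) M̂(λ)` -/
def uBdry (l N : ℕ) (q s : ℂ) (P : BulkParams N) (Bm : Bdry) (lam : ℂ) :
    Matrix (Fin 2) (Fin 2) (Op l N) :=
  mono l N q s P lam * lift2 l N (kM q s Bm lam) * mHat l N q s P lam

def opA (l N : ℕ) (q s : ℂ) (P : BulkParams N) (Bm : Bdry) (lam : ℂ) : Op l N :=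
  uBdry l N q s P Bm lam 0 0
def opB (l N : ℕ) (q s : ℂ) (P : BulkParams N) (Bm : Bdry) (lam : ℂ) : Op l N :=
  uBdry l N q s P Bm lam 0 1
def opC (l N : ℕ) (q s : ℂ) (P : BulkParams N) (Bm : Bdry) (lam : ℂ) : Op l N :=
  uBdry l N q s P Bm lam 1 0
def opD (l N : ℕ) (q s : ℂ) (P : BulkParams N) (Bm : Bdry) (lam : ℂ) : Op l N :=
  uBdry l N q s P Bm lam 1 1

/-- transfer matrix with the general boundary matrix `K_+(λ) = K(λq; ζ_+, κ_+, τ_+)` -/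
def transferGen (l N : ℕ) (q s : ℂ) (P : BulkParams N) (Bp Bm : Bdry) (lam : ℂ) : Op l N :=
  (lift2 l N (kM q s Bp (lam * q)) * uBdry l N q s P Bm lam).trace

/-- the upper-triangular `K_+` boundary matrix: `K(λq; ζ_+, κ_+, τ_+)` with `(1,2)` entry `0` -/
def kTriPlus (q s : ℂ) (B : Bdry) (lam : ℂ) : Matrix (Fin 2) (Fin 2) ℂ :=
  Matrix.of ![![kM q s B (lam * q) 0 0, 0], ![kM q s B (lam * q) 1 0, kM q s B (lam * q) 1 1]]

/-- transfer matrix with triangular `K_+` -/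
def transferTri (l N : ℕ) (q s : ℂ) (P : BulkParams N) (Bp Bm : Bdry) (lam : ℂ) : Op l N :=
  (lift2 l N (kTriPlus q s Bp lam) * uBdry l N q s P Bm lam).trace

/-- the scalar value `d_q M(λ)` of the bulk quantum determinant -/
def dqM (N : ℕ) (q : ℂ) (P : BulkParams N) (lam : ℂ) : ℂ :=
  (-q) ^ N * ∏ n, (P.β n * P.a n * P.c n / P.α n *
    (lam⁻¹ + q⁻¹ * P.b n * P.α n * lam / (P.a n * P.β n)) *
    (lam⁻¹ + q⁻¹ * P.d n * P.α n * lam / (P.c n * P.β n)))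

/-- the bulk function `a(λ)` -/
def aBulk (N : ℕ) (q a0 : ℂ) (P : BulkParams N) (lam : ℂ) : ℂ :=
  a0 * ∏ n, (P.β n / lam + q⁻¹ * P.b n * P.α n * lam / P.a n)

/-- the bulk function `d(λ)` -/
def dBulk (N : ℕ) (q a0 : ℂ) (P : BulkParams N) (lam : ℂ) : ℂ :=
  ((-1 : ℂ) ^ N / a0) *
    ∏ n, (P.a n * P.c n / P.α n * (lam⁻¹ + q * P.d n * P.α n * lam / (P.c n * P.β n)))

/-- the boundary function `g_-(λ)` -/
def gMin (s αm βm lam : ℂ) : ℂ :=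
  (lam * αm / s - s / (lam * αm)) * (lam * βm / s + s / (lam * βm)) /
    ((αm - αm⁻¹) * (βm + βm⁻¹))

/-- the function `𝖠_-(λ) = g_-(λ) a(λ q^{-1/2}) d(q^{-1/2} λ^{-1})` -/
def AAm (N : ℕ) (q s a0 αm βm : ℂ) (P : BulkParams N) (lam : ℂ) : ℂ :=
  gMin s αm βm lam * aBulk N q a0 P (lam / s) * dBulk N q a0 P (s * lam)⁻¹

/-- `a_0 = (-q)^N ∏_n q^{-j_n}` -/
def a0def (N : ℕ) (q : ℂ) (j : Fin N → ℕ) : ℂ := (-q) ^ N * ∏ n, (q ^ (j n))⁻¹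

/-- the coefficient `𝖺_+(λ)` -/
def aPl (q s ζp lam : ℂ) : ℂ :=
  (lam ^ 2 * q - 1 / (q * lam ^ 2)) * (lam * ζp / s - s / (lam * ζp)) /
    ((lam ^ 2 - 1 / lam ^ 2) * (ζp - ζp⁻¹))

/-- the coefficient `𝖽_+(λ)` -/
def dPl (q s ζp lam : ℂ) : ℂ :=
  (lam ^ 2 * q - 1 / (q * lam ^ 2)) * (ζp * s / lam - lam / (s * ζp)) /
    ((lam ^ 2 - 1 / lam ^ 2) * (ζp - ζp⁻¹))

/-- the function `k(λ)` -/
def kFun (q lam : ℂ) : ℂ := (lam ^ 2 - 1 / lam ^ 2) / (lam ^ 2 / q ^ 2 - q ^ 2 / lam ^ 2)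

/-- the separation points `ξ_n^{(h)} = μ_{n,+} q^{h+1/2}` -/
def xiP (N : ℕ) (q s : ℂ) (muP : Fin N → ℂ) (n : Fin N) (h : ℕ) : ℂ := muP n * q ^ h * s

/-- `X_n^{(h)} = (ξ_n^{(h)})^2 + (ξ_n^{(h)})^{-2}` -/
def XVal (N : ℕ) (q s : ℂ) (muP : Fin N → ℂ) (n : Fin N) (h : ℕ) : ℂ :=
  (xiP N q s muP n h) ^ 2 + ((xiP N q s muP n h) ^ 2)⁻¹

/-- the `B_-`-eigenvalue function `b_h(λ)` -/
def bEig (N : ℕ) (q s : ℂ) (Bm : Bdry) (P : BulkParams N) (muP : Fin N → ℂ)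
    (h : Fin N → ℕ) (lam : ℂ) : ℂ :=
  Bm.κ * Complex.exp Bm.τ * ((lam ^ 2 / q - q / lam ^ 2) / (Bm.ζ - Bm.ζ⁻¹)) *
    ∏ n, (P.α n * P.β n *
      (lam / xiP N q s muP n (h n) - xiP N q s muP n (h n) / lam) *
      ((lam * xiP N q s muP n (h n))⁻¹ - lam * xiP N q s muP n (h n)))

/-- the reference covector `⟨Ω| = ⊗_n ⟨j_n - 1|` -/
def refL (l N : ℕ) (j : Fin N → ℕ) : HIdx l N → ℂ :=
  fun x => ∏ n, (if x n = (j n : Zp l) - 1 then (1 : ℂ) else 0)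

/-- the reference vector `|Ω̄⟩ = ⊗_n |j_n⟩` -/
def refR (l N : ℕ) (j : Fin N → ℕ) : HIdx l N → ℂ :=
  fun x => ∏ n, (if x n = (j n : Zp l) then (1 : ℂ) else 0)

/-- the operator `∏_n ∏_{k=1}^{h_n} A_-(1/ξ_n^{(k-1)}) / 𝖠_-(1/ξ_n^{(k-1)})` -/
def leftOp (l N : ℕ) (q s a0 αm βm : ℂ) (P : BulkParams N) (Bm : Bdry) (muP : Fin N → ℂ)
    (h : Fin N → ℕ) : Op l N :=
  ((List.finRange N).map fun n =>
    (((List.range (h n)).map fun k =>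
      (AAm N q s a0 αm βm P ((xiP N q s muP n k)⁻¹))⁻¹ •
        opA l N q s P Bm ((xiP N q s muP n k)⁻¹)).prod)).prod

/-- the left SoV covector `⟨h|` -/
def leftSoV (l N : ℕ) (q s a0 αm βm : ℂ) (P : BulkParams N) (Bm : Bdry) (muP : Fin N → ℂ)
    (j h : Fin N → ℕ) : HIdx l N → ℂ :=
  Matrix.vecMul (refL l N j) (leftOp l N q s a0 αm βm P Bm muP h)

/-- the operator `∏_n ∏_{k=h_n}^{p-2} D_-(ξ_n^{(k+1)})/(k(ξ_n^{(k+1)}) 𝖠_-(1/ξ_n^{(k)}))` -/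
def rightOp (l N : ℕ) (q s a0 αm βm : ℂ) (P : BulkParams N) (Bm : Bdry) (muP : Fin N → ℂ)
    (h : Fin N → ℕ) : Op l N :=
  ((List.finRange N).map fun n =>
    (((List.range' (h n) (2 * l - h n)).map fun k =>
      (kFun q (xiP N q s muP n (k + 1)) * AAm N q s a0 αm βm P ((xiP N q s muP n k)⁻¹))⁻¹ •
        opD l N q s P Bm (xiP N q s muP n (k + 1))).prod)).prod

/-- the right SoV vector `|h⟩` -/
def rightSoV (l N : ℕ) (q s a0 αm βm : ℂ) (P : BulkParams N) (Bm : Bdry) (muP : Fin N → ℂ)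
    (j h : Fin N → ℕ) : HIdx l N → ℂ :=
  Matrix.mulVec (rightOp l N q s a0 αm βm P Bm muP h) (refR l N j)

/-- the condition (E-SOV) -/
def ESOV (N p : ℕ) (muP : Fin N → ℂ) : Prop :=
  ∀ n m : Fin N, n ≠ m → (muP n) ^ p ≠ (muP m) ^ p

/-- the condition (SoV-2) -/
def SOV2 (N l : ℕ) (q αm βm : ℂ) (muP muM : Fin N → ℂ) : Prop :=
  (∀ n, (muP n) ^ (2 * (2 * l + 1)) ≠ 1 ∧ (muP n) ^ (2 * (2 * l + 1)) ≠ -1) ∧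
  (∀ ε : ℤ, ε = 1 ∨ ε = -1 → ∀ h : ℕ, 1 ≤ h → h ≤ 2 * l → ∀ n m : Fin N,
    (muP n) ^ 2 ≠ q ^ (-2 * (h : ℤ)) * αm ^ (2 * ε) ∧
    (muP n) ^ 2 ≠ -(q ^ (-2 * (h : ℤ)) * βm ^ (2 * ε)) ∧
    (muP n) ^ 2 ≠ q ^ (-2 * ε - 2 * (h : ℤ)) * (muM m) ^ (2 * ε))

/-- the condition (cond-simple) -/
def CondSimple (N l : ℕ) (q ζp : ℂ) (muP : Fin N → ℂ) : Prop :=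
  ∀ h : ℕ, 1 ≤ h → h ≤ 2 * l → ∀ n : Fin N,
    (muP n) ^ 2 ≠ q ^ (-2 * (h : ℤ)) * ζp ^ 2 ∧
    (muP n) ^ 2 ≠ q ^ (-2 * (h : ℤ)) * ζp ^ (-2 : ℤ)

/-- the Vandermonde product `∏_{1 ≤ b < a ≤ N} (x_a - x_b)` -/
def vdm (N : ℕ) (x : Fin N → ℂ) : ℂ := ∏ a : Fin N, ∏ b ∈ Finset.Iio a, (x a - x b)

/-- the `p×p` Baxter matrix `D_{τ,f}(λ)` -/
def dMat (l : ℕ) (q : ℂ) (tf ff : ℂ → ℂ) (lam : ℂ) : Matrix (Zp l) (Zp l) ℂ :=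
  Matrix.of fun j k =>
    if k = j then tf (q ^ j.val * lam)
    else if k = j + 1 then -ff ((q ^ j.val * lam)⁻¹)
    else if k = j - 1 then -ff (q ^ j.val * lam)
    else 0

/-- the coefficient `𝖺(λ) = 𝖺_+(λ) 𝖠_-(λ)` -/
def sfA (N : ℕ) (q s a0 αm βm ζp : ℂ) (P : BulkParams N) (lam : ℂ) : ℂ :=
  aPl q s ζp lam * AAm N q s a0 αm βm P lam

/-- the coefficient `ā(λ) = λ q^{-1/2} 𝖺(λ)` -/
def sfAbar (N : ℕ) (q s a0 αm βm ζp : ℂ) (P : BulkParams N) (lam : ℂ) : ℂ :=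
  lam / s * sfA N q s a0 αm βm ζp P lam

/-- the coefficient `𝖽(λ) = 𝖽_+(λ) 𝖣_-(λ)`, `𝖣_-(λ) = k(λ) 𝖠_-(q/λ)` -/
def sfD (N : ℕ) (q s a0 αm βm ζp : ℂ) (P : BulkParams N) (lam : ℂ) : ℂ :=
  dPl q s ζp lam * (kFun q lam * AAm N q s a0 αm βm P (q / lam))

/-- the asymptotic value `τ_∞` for the general transfer matrix -/
def tauInfGen (N : ℕ) (q : ℂ) (Bp Bm : Bdry) (P : BulkParams N) : ℂ :=
  Bp.κ * Bm.κ *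
    (Complex.exp (Bp.τ - Bm.τ) * (∏ n, (P.b n * P.d n / P.β n * (P.a n * P.c n / P.α n))) +
     Complex.exp (Bm.τ - Bp.τ) * (∏ n, (P.α n * P.β n))) /
    ((Bp.ζ - Bp.ζ⁻¹) * (Bm.ζ - Bm.ζ⁻¹))

/-- the asymptotic value `τ_∞` for the triangular `K_+` transfer matrix -/
def tauInfTri (N : ℕ) (Bp Bm : Bdry) (P : BulkParams N) : ℂ :=
  (-1 : ℂ) ^ N * Bp.κ * Bm.κ * Complex.exp (Bm.τ - Bp.τ) * (∏ n, (P.α n * P.β n)) /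
    ((Bp.ζ - Bp.ζ⁻¹) * (Bm.ζ - Bm.ζ⁻¹))

/-- the function `F(λ)` -/
def Ff (l N : ℕ) (q s : ℂ) (muP : Fin N → ℂ) (lam : ℂ) : ℂ :=
  ∏ n : Fin N,
    ((lam ^ (2 * l + 1) / (xiP N q s muP n 0) ^ (2 * l + 1) -
        (xiP N q s muP n 0) ^ (2 * l + 1) / lam ^ (2 * l + 1)) *
     (lam ^ (2 * l + 1) * (xiP N q s muP n 0) ^ (2 * l + 1) -
        (lam ^ (2 * l + 1) * (xiP N q s muP n 0) ^ (2 * l + 1))⁻¹))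

/-- the asymptotic value `ā_∞` -/
def abarInf (N : ℕ) (q αm βm : ℂ) (Bp Bm : Bdry) (P : BulkParams N) : ℂ :=
  (-1 : ℂ) ^ N * αm * βm * Bp.ζ * Bm.κ * (∏ n, (P.b n * P.c n)) /
    (q ^ (1 + N) * (Bp.ζ - Bp.ζ⁻¹) * (Bm.ζ - Bm.ζ⁻¹))

/-- the inhomogeneity `G(λ | x, y)` -/
def Gf (l N : ℕ) (q s a0 αm βm : ℂ) (Bp Bm : Bdry) (P : BulkParams N) (muP : Fin N → ℂ)
    (lam x y : ℂ) : ℂ :=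
  Ff l N q s muP lam *
    ((tauInfTri N Bp Bm P - q ^ (-(4 * (l : ℤ) * N)) * abarInf N q αm βm Bp Bm P) * x *
        ((lam / s - s / lam) * (s * lam - (s * lam)⁻¹) *
         (lam / (Complex.I * s) - Complex.I * s / lam) *
         (Complex.I * s * lam - (Complex.I * s * lam)⁻¹)) +
      (Complex.I - 1) * y * sfA N q s a0 αm βm Bp.ζ P (Complex.I * s) /
          (4 * Ff l N q s muP (Complex.I * s)) *
        ((lam * s - (lam * s)⁻¹) * (lam / s - (lam / s)⁻¹)))

/-- `τ` is an eigenvalue function of the family `T`, i.e. `τ ∈ Σ_T` -/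
def inSpec (l N : ℕ) (T : ℂ → Op l N) (tf : ℂ → ℂ) : Prop :=
  ∃ w : HIdx l N → ℂ, w ≠ 0 ∧ ∀ lam : ℂ, lam ≠ 0 → Matrix.mulVec (T lam) w = tf lam • w

/-- the joint eigenspace `E_τ` of the family `T` -/
def eigSp (l N : ℕ) (T : ℂ → Op l N) (tf : ℂ → ℂ) : Submodule ℂ (HIdx l N → ℂ) :=
  ⨅ lam : {x : ℂ // x ≠ 0},
    Module.End.eigenspace (Matrix.mulVecLin (T lam.1)) (tf lam.1)

/-- the admissible functional form of transfer matrix eigenvalues -/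
def admissible (N : ℕ) (q s tinf : ℂ) (Bp Bm : Bdry) (P : BulkParams N) (tf : ℂ → ℂ) : Prop :=
  (∃ Pol : Polynomial ℂ, Pol.degree ≤ ((N + 2 : ℕ) : WithBot ℕ) ∧
      Pol.coeff (N + 2) = tinf ∧
      ∀ lam : ℂ, lam ≠ 0 → tf lam = Pol.eval (lam ^ 2 + (lam ^ 2)⁻¹)) ∧
  tf s = (-1 : ℂ) ^ N * (q + q⁻¹) * dqM N q P 1 ∧
  tf (Complex.I * s) = (-1 : ℂ) ^ N * (q + q⁻¹) *
    ((Bp.ζ + Bp.ζ⁻¹) * (Bm.ζ + Bm.ζ⁻¹) / ((Bp.ζ - Bp.ζ⁻¹) * (Bm.ζ - Bm.ζ⁻¹))) *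
    dqM N q P Complex.I

/-- the separate state with coefficients `Q_a^{(h_a)}` in the right SoV basis -/
def sovVec (l N : ℕ) (q s a0 αm βm : ℂ) (P : BulkParams N) (Bm : Bdry) (muP : Fin N → ℂ)
    (j : Fin N → ℕ) (Q : Fin N → Zp l → ℂ) : HIdx l N → ℂ :=
  ∑ h : Fin N → Fin (2 * l + 1),
    ((∏ a, Q a ((h a : ℕ) : Zp l)) * vdm N (fun a => XVal N q s muP a ((h a : ℕ)))) •
      rightSoV l N q s a0 αm βm P Bm muP j (fun n => (h n : ℕ))

/-- the renormalized operator `B̂_-(λ)` -/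
def bHatOp (l N : ℕ) (q s : ℂ) (P : BulkParams N) (Bm : Bdry) (lam : ℂ) : Op l N :=
  ((Bm.ζ - Bm.ζ⁻¹) /
      (Bm.κ * Complex.exp Bm.τ * (lam ^ 2 / q - q / lam ^ 2) * ∏ n, (P.α n * P.β n))) •
    opB l N q s P Bm lam

/-- the state `|ω̄⟩` -/
def omegaBar (l N : ℕ) (q s a0 αm βm : ℂ) (P : BulkParams N) (Bm : Bdry) (muP : Fin N → ℂ)
    (j : Fin N → ℕ) : HIdx l N → ℂ :=
  ∑ h : Fin N → Fin (2 * l + 1),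
    (vdm N (fun a => XVal N q s muP a ((h a : ℕ)))) •
      rightSoV l N q s a0 αm βm P Bm muP j (fun n => (h n : ℕ))

/-- the recursively defined coefficients `t^{(h)}`:
`t^{(0)} = 1`, `t^{(1)} = F 0`, `t^{(h+2)} = F(h+1) t^{(h+1)} - G(h+1) t^{(h)}` -/
def tseq (F G : ℕ → ℂ) : ℕ → ℂ
  | 0 => 1
  | 1 => F 0
  | (h + 2) => F (h + 1) * tseq F G (h + 1) - G (h + 1) * tseq F G h

end SixV

/-!
Under `b = -q^{2j-1} a` the coefficient `q^{-1/2} a q^j + q^{1/2} b q^{-j}` vanishes, so the `B`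
entry `u (q^{-1/2} a v + q^{1/2} b v⁻¹)` of a Lax operator kills `|j⟩` and, as `⟨j-1| u = ⟨j|`,
also `⟨j-1|`, while its `A` and `D` entries are diagonal. Thus each Lax operator is triangular on
the local reference state. In the product `M = L_N ⋯ L_1` the terms created by a `C` entry at one
site are still in the reference state at the other sites and are killed by a later `B`, so `B`
annihilates the reference states and `A`, `D` act by the products of the local eigenvalues.
-/

namespace SixV

section TriangularProduct

variable {ι κ R : Type*} [CommRing R] [Fintype κ] [DecidableEq κ]
  (F : ι → Matrix (Fin 2) (Fin 2) (Matrix κ κ R)) (f g : ι → R) (W : ι → Set (κ → R))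

theorem list_prod_mulVec_of_triangular
    (hF : ∀ n, ∀ w ∈ W n, F n 0 1 *ᵥ w = 0 ∧ F n 0 0 *ᵥ w = f n • w ∧ F n 1 1 *ᵥ w = g n • w)
    (hW : ∀ n m, m ≠ n → ∀ w ∈ W m, F n 1 0 *ᵥ w ∈ W m) :
    ∀ ns : List ι, ns.Nodup → ∀ w, (∀ n ∈ ns, w ∈ W n) →
      (ns.reverse.map F).prod 0 1 *ᵥ w = 0 ∧
      (ns.reverse.map F).prod 0 0 *ᵥ w = (ns.map f).prod • w ∧
      (ns.reverse.map F).prod 1 1 *ᵥ w = (ns.map g).prod • w := by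
  intro ns
  induction ns with
  | nil => simp
  | cons n rest ih =>
    intro hnd w hw
    obtain ⟨hn, hrest⟩ := List.nodup_cons.mp hnd
    obtain ⟨hB, hA, hD⟩ := hF n w (hw n List.mem_cons_self)
    set Q := (rest.reverse.map F).prod
    have hentry : ∀ i k : Fin 2, ((n :: rest).reverse.map F).prod i k *ᵥ w
        = Q i 0 *ᵥ (F n 0 k *ᵥ w) + Q i 1 *ᵥ (F n 1 k *ᵥ w) := by
      intro i k
      simp only [List.reverse_cons, List.map_append, List.prod_append, List.map_singleton,
        List.prod_singleton, Matrix.mul_apply, Fin.sum_univ_two, Matrix.add_mulVec,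
        Matrix.mulVec_mulVec, Q]
    obtain ⟨ihB, ihA, ihD⟩ := ih hrest w fun m hm => hw m (List.mem_cons_of_mem n hm)
    -- `F n 1 0 *ᵥ w` is still in `W m` for the remaining sites, so `Q 0 1` kills it
    have ihB' := (ih hrest (F n 1 0 *ᵥ w) fun m hm =>
      hW n m (ne_of_mem_of_not_mem hm hn) w (hw m (List.mem_cons_of_mem n hm))).1
    refine ⟨?_, ?_, ?_⟩
    · rw [hentry, hB, hD, Matrix.mulVec_zero, Matrix.mulVec_smul, ihB, smul_zero, add_zero]
    · rw [hentry, hA, Matrix.mulVec_smul, ihA, ihB', add_zero, List.map_cons, List.prod_cons,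
        smul_smul]
    · rw [hentry, hB, hD, Matrix.mulVec_zero, Matrix.mulVec_smul, ihD, zero_add, List.map_cons,
        List.prod_cons, smul_smul]

theorem vecMul_list_prod_of_triangular
    (hF : ∀ n, ∀ w ∈ W n, w ᵥ* F n 0 1 = 0 ∧ w ᵥ* F n 0 0 = f n • w ∧ w ᵥ* F n 1 1 = g n • w)
    (hW : ∀ n m, m ≠ n → ∀ w ∈ W m, w ᵥ* F n 1 0 ∈ W m) :
    ∀ ns : List ι, ns.Nodup → ∀ w, (∀ n ∈ ns, w ∈ W n) →
      w ᵥ* (ns.map F).prod 0 1 = 0 ∧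
      w ᵥ* (ns.map F).prod 0 0 = (ns.map f).prod • w ∧
      w ᵥ* (ns.map F).prod 1 1 = (ns.map g).prod • w := by
  intro ns
  induction ns with
  | nil => simp
  | cons n rest ih =>
    intro hnd w hw
    obtain ⟨hn, hrest⟩ := List.nodup_cons.mp hnd
    obtain ⟨hB, hA, hD⟩ := hF n w (hw n List.mem_cons_self)
    set Q := (rest.map F).prod
    have hentry : ∀ i k : Fin 2, w ᵥ* ((n :: rest).map F).prod i k
        = (w ᵥ* F n i 0) ᵥ* Q 0 k + (w ᵥ* F n i 1) ᵥ* Q 1 k := by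
      intro i k
      simp only [List.map_cons, List.prod_cons, Matrix.mul_apply, Fin.sum_univ_two,
        Matrix.vecMul_add, Matrix.vecMul_vecMul, Q]
    obtain ⟨ihB, ihA, ihD⟩ := ih hrest w fun m hm => hw m (List.mem_cons_of_mem n hm)
    have ihB' := (ih hrest (w ᵥ* F n 1 0) fun m hm =>
      hW n m (ne_of_mem_of_not_mem hm hn) w (hw m (List.mem_cons_of_mem n hm))).1
    refine ⟨?_, ?_, ?_⟩
    · rw [hentry, hA, hB, Matrix.smul_vecMul, ihB, Matrix.zero_vecMul, smul_zero, add_zero]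
    · rw [hentry, hA, hB, Matrix.smul_vecMul, ihA, Matrix.zero_vecMul, add_zero, List.map_cons,
        List.prod_cons, smul_smul]
    · rw [hentry, hD, ihB', Matrix.smul_vecMul, ihD, zero_add, List.map_cons, List.prod_cons,
        smul_smul]

end TriangularProduct

/-- Vectors of `H` whose `n`-th tensor factor is the basis vector `|t⟩`. -/
def concentratedAt (l N : ℕ) (n : Fin N) (t : Zp l) : Set (HIdx l N → ℂ) :=
  {w | ∀ x, x n ≠ t → w x = 0}

section Site

variable {l N : ℕ} (n : Fin N) (A : Matrix (Zp l) (Zp l) ℂ)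

theorem site_mulVec_apply (w : HIdx l N → ℂ) (x : HIdx l N) :
    (site l N n A *ᵥ w) x = ∑ k, A (x n) k * w (Function.update x n k) := by
  have hinj : Set.InjOn (Function.update x n) (Finset.univ : Finset (Zp l)) :=
    fun k₁ _ k₂ _ h => by simpa using congrFun h n
  simp only [Matrix.mulVec, dotProduct, site, Matrix.of_apply]
  rw [← Finset.sum_subset (Finset.subset_univ (Finset.univ.image (Function.update x n))),
    Finset.sum_image hinj]
  · refine Finset.sum_congr rfl fun k _ => ?_
    rw [Function.update_self, Finset.prod_eq_one, mul_one]
    intro m hm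
    rw [Function.update_of_ne (Finset.ne_of_mem_erase hm), if_pos rfl]
  · intro y _ hy
    obtain ⟨m, hm⟩ := Function.ne_iff.mp fun h : y = Function.update x n (y n) =>
      hy (Finset.mem_image.mpr ⟨y n, Finset.mem_univ _, h.symm⟩)
    have hmn : m ≠ n := by rintro rfl; simp at hm
    rw [Function.update_of_ne hmn] at hm
    rw [Finset.prod_eq_zero (Finset.mem_erase.mpr ⟨hmn, Finset.mem_univ m⟩)
      (if_neg fun h => hm h.symm), mul_zero, zero_mul]

theorem transpose_site : (site l N n A)ᵀ = site l N n Aᵀ := by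
  ext x y
  simp only [Matrix.transpose_apply, site, Matrix.of_apply, eq_comm]

theorem site_mulVec_mem_concentratedAt {m : Fin N} (hmn : m ≠ n) {t : Zp l} {w : HIdx l N → ℂ}
    (hw : w ∈ concentratedAt l N m t) : site l N n A *ᵥ w ∈ concentratedAt l N m t := by
  intro x hx
  rw [site_mulVec_apply]
  refine Finset.sum_eq_zero fun k _ => ?_
  rw [hw _ (by rwa [Function.update_of_ne hmn]), mul_zero]

theorem site_mulVec_apply_of_mem {t : Zp l} {w : HIdx l N → ℂ}
    (hw : w ∈ concentratedAt l N n t) (x : HIdx l N) :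
    (site l N n A *ᵥ w) x = A (x n) t * w (Function.update x n t) := by
  rw [site_mulVec_apply, Finset.sum_eq_single t]
  · intro k _ hk
    rw [hw _ (by simpa using hk), mul_zero]
  · simp

theorem site_mulVec_eq_zero {t : Zp l} (hA : ∀ i, A i t = 0) {w : HIdx l N → ℂ}
    (hw : w ∈ concentratedAt l N n t) : site l N n A *ᵥ w = 0 := by
  ext x
  rw [site_mulVec_apply_of_mem n A hw, hA, zero_mul, Pi.zero_apply]

theorem site_diagonal_mulVec (d : Zp l → ℂ) {t : Zp l} {w : HIdx l N → ℂ}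
    (hw : w ∈ concentratedAt l N n t) : site l N n (Matrix.diagonal d) *ᵥ w = d t • w := by
  ext x
  rw [site_mulVec_apply_of_mem n _ hw, Pi.smul_apply, smul_eq_mul]
  by_cases hx : x n = t
  · rw [← hx, Function.update_eq_self, Matrix.diagonal_apply_eq]
  · rw [Matrix.diagonal_apply_ne _ hx, zero_mul, hw x hx, mul_zero]

end Site

/-- Eigenvalue of the `A` entry `λ α v - β λ⁻¹ v⁻¹` of the Lax operator where `v = x`. -/
def laxA (pα pβ lam x : ℂ) : ℂ := lam * pα * x - pβ / lam * x⁻¹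

/-- Eigenvalue of the `D` entry `γ λ⁻¹ v - δ λ v⁻¹` of the Lax operator where `v = x`. -/
def laxD (pα pβ pa pb pc pd lam x : ℂ) : ℂ := pa * pc / pα / lam * x - pb * pd / pβ * lam * x⁻¹

section Lax

variable (l : ℕ) (q s pα pβ pa pb pc pd lam : ℂ)

theorem laxM_zero_zero :
    laxM l q s pα pβ pa pb pc pd lam 0 0 =
      Matrix.diagonal fun k => laxA pα pβ lam (q ^ k.val) := by
  ext i k
  by_cases h : i = k <;> simp [laxM, vM, vMinv, laxA, h]

theorem laxM_one_one :
    laxM l q s pα pβ pa pb pc pd lam 1 1 =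
      Matrix.diagonal fun k => laxD pα pβ pa pb pc pd lam (q ^ k.val) := by
  ext i k
  by_cases h : i = k <;> simp [laxM, vM, vMinv, laxD, h]

theorem laxM_zero_one :
    laxM l q s pα pβ pa pb pc pd lam 0 1 =
      uM l * Matrix.diagonal fun k => pa / s * q ^ k.val + s * pb * (q ^ k.val)⁻¹ := by
  simp only [laxM, vM, vMinv, Matrix.of_apply, Matrix.cons_val_zero, Matrix.cons_val_one,
    ← Matrix.diagonal_smul, Matrix.diagonal_add]
  rfl

end Lax

section ReferenceStates

variable {l N : ℕ} {q s : ℂ}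

theorem pow_val_intCast (hq : q ^ (2 * l + 1) = 1) (m : ℤ) : q ^ (m : Zp l).val = q ^ m := by
  have hq0 : q ≠ 0 := by rintro rfl; simp at hq
  rw [← zpow_natCast, ZMod.val_intCast]
  conv_rhs => rw [← Int.emod_add_mul_ediv m (2 * l + 1 : ℕ)]
  rw [zpow_add₀ hq0, _root_.zpow_mul, zpow_natCast, hq, _root_.one_zpow, mul_one]

/-- The constraint `b = -q^{2m-1} a` is exactly what makes the `B` entry kill `|m⟩`. -/
theorem shift_coeff_eq_zero (hs : s ^ 2 = q) {a b : ℂ} (m : ℤ) (hb : b = -q ^ (2 * m - 1) * a) :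
    a / s * q ^ m + s * b * (q ^ m)⁻¹ = 0 := by
  rcases eq_or_ne s 0 with rfl | hs0
  · simp
  subst hs hb
  have hX : (s ^ 2) ^ m ≠ 0 := zpow_ne_zero m (pow_ne_zero 2 hs0)
  rw [zpow_sub₀ (pow_ne_zero 2 hs0), zpow_one, mul_comm 2 m, _root_.zpow_mul, zpow_two]
  field_simp
  ring

variable (P : BulkParams N)

theorem laxSite_mulVec_of_mem (hq : q ^ (2 * l + 1) = 1) (hs : s ^ 2 = q) {n : Fin N} {m : ℕ}
    (hb : P.b n = -q ^ (2 * (m : ℤ) - 1) * P.a n) (μ : ℂ) {w : HIdx l N → ℂ}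
    (hw : w ∈ concentratedAt l N n (m : Zp l)) :
    laxSite l N q s P n μ 0 1 *ᵥ w = 0 ∧
    laxSite l N q s P n μ 0 0 *ᵥ w = laxA (P.α n) (P.β n) μ (q ^ (m : ℤ)) • w ∧
    laxSite l N q s P n μ 1 1 *ᵥ w =
      laxD (P.α n) (P.β n) (P.a n) (P.b n) (P.c n) (P.d n) μ (q ^ (m : ℤ)) • w := by
  have hv : q ^ (m : Zp l).val = q ^ (m : ℤ) := by rw [← pow_val_intCast hq, Int.cast_natCast]
  simp only [laxSite, Matrix.of_apply]
  refine ⟨site_mulVec_eq_zero n _ (fun i => ?_) hw, ?_, ?_⟩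
  · rw [laxM_zero_one, Matrix.mul_diagonal, hv, shift_coeff_eq_zero hs m hb, mul_zero]
  · rw [laxM_zero_zero, site_diagonal_mulVec n _ hw, hv]
  · rw [laxM_one_one, site_diagonal_mulVec n _ hw, hv]

theorem vecMul_laxSite_of_mem (hq : q ^ (2 * l + 1) = 1) (hs : s ^ 2 = q) {n : Fin N} {m : ℕ}
    (hb : P.b n = -q ^ (2 * (m : ℤ) - 1) * P.a n) (μ : ℂ) {w : HIdx l N → ℂ}
    (hw : w ∈ concentratedAt l N n ((m : Zp l) - 1)) :
    w ᵥ* laxSite l N q s P n μ 0 1 = 0 ∧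
    w ᵥ* laxSite l N q s P n μ 0 0 = laxA (P.α n) (P.β n) μ (q ^ ((m : ℤ) - 1)) • w ∧
    w ᵥ* laxSite l N q s P n μ 1 1 =
      laxD (P.α n) (P.β n) (P.a n) (P.b n) (P.c n) (P.d n) μ (q ^ ((m : ℤ) - 1)) • w := by
  have hv : q ^ (m : Zp l).val = q ^ (m : ℤ) := by rw [← pow_val_intCast hq, Int.cast_natCast]
  have hv' : q ^ ((m : Zp l) - 1).val = q ^ ((m : ℤ) - 1) := by
    rw [← pow_val_intCast hq]; push_cast; rfl
  simp only [laxSite, Matrix.of_apply, ← Matrix.mulVec_transpose, transpose_site]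
  refine ⟨site_mulVec_eq_zero n _ (fun k => ?_) hw, ?_, ?_⟩
  · rw [Matrix.transpose_apply, laxM_zero_one, Matrix.mul_diagonal, uM, Matrix.of_apply]
    split_ifs with h
    · rw [← sub_left_inj.mp h, hv, shift_coeff_eq_zero hs m hb, mul_zero]
    · rw [zero_mul]
  · rw [laxM_zero_zero, Matrix.diagonal_transpose, site_diagonal_mulVec n _ hw, hv']
  · rw [laxM_one_one, Matrix.diagonal_transpose, site_diagonal_mulVec n _ hw, hv']

variable (j : Fin N → ℕ)

theorem refR_mem_concentratedAt (n : Fin N) : refR l N j ∈ concentratedAt l N n (j n) :=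
  fun _ hx => Finset.prod_eq_zero (Finset.mem_univ n) (if_neg hx)

theorem refL_mem_concentratedAt (n : Fin N) :
    refL l N j ∈ concentratedAt l N n ((j n : Zp l) - 1) :=
  fun _ hx => Finset.prod_eq_zero (Finset.mem_univ n) (if_neg hx)

theorem mono_mulVec_refR (hq : q ^ (2 * l + 1) = 1) (hs : s ^ 2 = q)
    (hcon : ∀ n, P.b n = -q ^ (2 * (j n : ℤ) - 1) * P.a n) (μ : ℂ) :
    mono l N q s P μ 0 1 *ᵥ refR l N j = 0 ∧
    mono l N q s P μ 0 0 *ᵥ refR l N j =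
      (∏ n, laxA (P.α n) (P.β n) (μ / s) (q ^ (j n : ℤ))) • refR l N j ∧
    mono l N q s P μ 1 1 *ᵥ refR l N j =
      (∏ n, laxD (P.α n) (P.β n) (P.a n) (P.b n) (P.c n) (P.d n) (μ / s) (q ^ (j n : ℤ))) •
        refR l N j := by
  simpa only [mono, ← Fin.prod_univ_def] using
    list_prod_mulVec_of_triangular _ _ _ (fun n => concentratedAt l N n (j n))
      (fun n _ hw => laxSite_mulVec_of_mem P hq hs (hcon n) (μ / s) hw)
      (fun n _ hmn _ hw => site_mulVec_mem_concentratedAt n _ hmn hw)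
      (List.finRange N) (List.nodup_finRange N) _ fun n _ => refR_mem_concentratedAt j n

theorem refL_vecMul_mono (hq : q ^ (2 * l + 1) = 1) (hs : s ^ 2 = q)
    (hcon : ∀ n, P.b n = -q ^ (2 * (j n : ℤ) - 1) * P.a n) (μ : ℂ) :
    refL l N j ᵥ* mono l N q s P μ 0 1 = 0 ∧
    refL l N j ᵥ* mono l N q s P μ 0 0 =
      (∏ n, laxA (P.α n) (P.β n) (μ / s) (q ^ ((j n : ℤ) - 1))) • refL l N j ∧
    refL l N j ᵥ* mono l N q s P μ 1 1 =
      (∏ n, laxD (P.α n) (P.β n) (P.a n) (P.b n) (P.c n) (P.d n) (μ / s)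
        (q ^ ((j n : ℤ) - 1))) • refL l N j := by
  simpa only [mono, List.map_reverse, List.prod_reverse, ← Fin.prod_univ_def] using
    vecMul_list_prod_of_triangular _ _ _ (fun n => concentratedAt l N n ((j n : Zp l) - 1))
      (fun n _ hw => vecMul_laxSite_of_mem P hq hs (hcon n) (μ / s) hw)
      (fun n _ hmn _ hw => by
        simpa only [laxSite, Matrix.of_apply, ← Matrix.mulVec_transpose, transpose_site] using
          site_mulVec_mem_concentratedAt n _ hmn hw)
      (List.finRange N).reverse (List.nodup_reverse.mpr (List.nodup_finRange N)) _
      fun n _ => refL_mem_concentratedAt j n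

end ReferenceStates

theorem reference_states_general (l N : ℕ) (q s : ℂ)
    (hq : IsPrimitiveRoot q (2 * l + 1)) (hs : s ^ 2 = q)
    (P : BulkParams N)
    (j : Fin N → ℕ)
    (hcon : ∀ n, P.b n = -q ^ (2 * (j n : ℤ) - 1) * P.a n)
    (aJ dJ : ℂ → ℂ)
    (haJ : ∀ lam : ℂ, aJ lam =
      ∏ n, (lam * q ^ ((j n : ℤ) - 1) * P.α n - P.β n * q ^ (1 - (j n : ℤ)) / lam))
    (hdJ : ∀ lam : ℂ, dJ lam =
      ∏ n, (P.a n * P.c n / P.α n * q ^ ((j n : ℤ) - 1) / lam -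
        lam * q ^ (1 - (j n : ℤ)) * (P.b n * P.d n / P.β n))) :
    ∀ lam : ℂ, lam ≠ 0 →
      Matrix.vecMul (refL l N j) (mono l N q s P (lam * s) 0 0) = aJ lam • refL l N j ∧
      Matrix.vecMul (refL l N j) (mono l N q s P (lam * s) 1 1) = dJ lam • refL l N j ∧
      Matrix.vecMul (refL l N j) (mono l N q s P lam 0 1) = 0 ∧
      Matrix.mulVec (mono l N q s P (lam * s) 0 0) (refR l N j) = aJ (lam * q) • refR l N j ∧
      Matrix.mulVec (mono l N q s P (lam * s) 1 1) (refR l N j) = dJ (lam / q) • refR l N j ∧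
      Matrix.mulVec (mono l N q s P lam 0 1) (refR l N j) = 0 := by
  intro lam _
  have hq0 : q ≠ 0 := hq.ne_zero (by omega)
  have hs0 : s ≠ 0 := by rintro rfl; exact hq0 (by rw [← hs]; ring)
  have hinv : ∀ n, q ^ (1 - (j n : ℤ)) = (q ^ ((j n : ℤ) - 1))⁻¹ := fun n => by
    rw [← _root_.zpow_neg, neg_sub]
  have hsucc : ∀ n, q ^ (j n : ℤ) = q ^ ((j n : ℤ) - 1) * q := fun n => by
    rw [← zpow_add_one₀ hq0, sub_add_cancel]
  obtain ⟨-, hAL, hDL⟩ := refL_vecMul_mono P j hq.pow_eq_one hs hcon (lam * s)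
  obtain ⟨-, hAR, hDR⟩ := mono_mulVec_refR P j hq.pow_eq_one hs hcon (lam * s)
  rw [mul_div_cancel_right₀ _ hs0] at hAL hDL hAR hDR
  refine ⟨?_, ?_, (refL_vecMul_mono P j hq.pow_eq_one hs hcon lam).1, ?_, ?_,
    (mono_mulVec_refR P j hq.pow_eq_one hs hcon lam).1⟩
  · rw [hAL, haJ]
    congr 1; refine Finset.prod_congr rfl fun n _ => ?_
    rw [laxA, hinv]; ring
  · rw [hDL, hdJ]
    congr 1; refine Finset.prod_congr rfl fun n _ => ?_
    rw [laxD, hinv]; ring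
  · rw [hAR, haJ]
    congr 1; refine Finset.prod_congr rfl fun n _ => ?_
    rw [laxA, hinv, hsucc]; ring
  · rw [hDR, hdJ]
    congr 1; refine Finset.prod_congr rfl fun n _ => ?_
    rw [laxD, hinv, hsucc, div_div_eq_mul_div]; ring

/-- action of the bulk monodromy matrix entries on the reference
covector `⟨Ω|` and reference vector `|Ω̄⟩` under the constraint
`b_n = -q^{2 j_n - 1} a_n`. -/
theorem reference_states (l N : ℕ) (hl : 1 ≤ l) (hN : 1 ≤ N) (q s : ℂ)
    (hq : IsPrimitiveRoot q (2 * l + 1)) (hs : s ^ 2 = q)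
    (P : BulkParams N) (hP : P.NonZero)
    (j : Fin N → ℕ) (hj : ∀ n, j n ≤ 2 * l)
    (hcon : ∀ n, P.b n = -q ^ (2 * (j n : ℤ) - 1) * P.a n)
    (aJ dJ : ℂ → ℂ)
    (haJ : ∀ lam : ℂ, aJ lam =
      ∏ n, (lam * q ^ ((j n : ℤ) - 1) * P.α n - P.β n * q ^ (1 - (j n : ℤ)) / lam))
    (hdJ : ∀ lam : ℂ, dJ lam =
      ∏ n, (P.a n * P.c n / P.α n * q ^ ((j n : ℤ) - 1) / lam -
        lam * q ^ (1 - (j n : ℤ)) * (P.b n * P.d n / P.β n))) :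
    ∀ lam : ℂ, lam ≠ 0 →
      Matrix.vecMul (refL l N j) (mono l N q s P (lam * s) 0 0) = aJ lam • refL l N j ∧
      Matrix.vecMul (refL l N j) (mono l N q s P (lam * s) 1 1) = dJ lam • refL l N j ∧
      Matrix.vecMul (refL l N j) (mono l N q s P lam 0 1) = 0 ∧
      Matrix.mulVec (mono l N q s P (lam * s) 0 0) (refR l N j) = aJ (lam * q) • refR l N j ∧
      Matrix.mulVec (mono l N q s P (lam * s) 1 1) (refR l N j) = dJ (lam / q) • refR l N j ∧
      Matrix.mulVec (mono l N q s P lam 0 1) (refR l N j) = 0 :=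
  reference_states_general l N q s hq hs P j hcon aJ dJ haJ hdJ

end SixV
end
end

section
/- Let τ, f : ℂˣ → ℂ with τ(1/λ) = τ(λ) for all λ ∈ ℂˣ. Then the determinant of the p×p matrix D_{τ,f}(λ) satisfies det D_{τ,f}(qλ) = det D_{τ,f}(λ) and det D_{τ,f}(1/λ) = det D_{τ,f}(λ) for all λ ∈ ℂˣ; consequently, whenever λ^p = μ^p or λ^p = μ^{−p}, one has det D_{τ,f}(λ) = det D_{τ,f}(μ), i.e., det D_{τ,f}(λ) is a function of λ^p invariant under λ^p → 1/λ^p. -/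
open Matrix Polynomial Filter Topology

noncomputable section

namespace SixV

/-- for `τ` invariant under `λ → 1/λ`, the determinant of the
Baxter matrix `D_{τ,f}(λ)` is invariant under `λ → qλ` and `λ → 1/λ`, hence is a
function of `λ^p` invariant under `λ^p → 1/λ^p`. -/
theorem det_dMat_invariance (l : ℕ) (hl : 1 ≤ l) (q : ℂ)
    (hq : IsPrimitiveRoot q (2 * l + 1))
    (tf ff : ℂ → ℂ) (htf : ∀ lam : ℂ, lam ≠ 0 → tf lam⁻¹ = tf lam) :
    (∀ lam : ℂ, lam ≠ 0 → (dMat l q tf ff (q * lam)).det = (dMat l q tf ff lam).det) ∧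
    (∀ lam : ℂ, lam ≠ 0 → (dMat l q tf ff lam⁻¹).det = (dMat l q tf ff lam).det) ∧
    (∀ lam mu : ℂ, lam ≠ 0 → mu ≠ 0 →
      (lam ^ (2 * l + 1) = mu ^ (2 * l + 1) ∨ lam ^ (2 * l + 1) = (mu ^ (2 * l + 1))⁻¹) →
      (dMat l q tf ff lam).det = (dMat l q tf ff mu).det) := by
  haveI : Fact (1 < 2 * l + 1) := ⟨by omega⟩
  have hq0 : q ≠ 0 := hq.ne_zero (by omega)
  have hord : orderOf q = 2 * l + 1 := hq.eq_orderOf.symm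
  have hpowmod : ∀ a : ℕ, q ^ (a % (2 * l + 1)) = q ^ a := by
    intro a; rw [← hord]; exact pow_mod_orderOf q a
  have hval1 : ∀ j : Zp l, q ^ ((j + 1 : Zp l).val) = q ^ j.val * q := by
    intro j
    have h : (j + 1 : Zp l).val = (j.val + 1) % (2 * l + 1) := by
      rw [ZMod.val_add, ZMod.val_one]
    rw [h, hpowmod, pow_succ]
  have hvalneg : ∀ j : Zp l, q ^ ((-j : Zp l).val) = (q ^ j.val)⁻¹ := by
    intro j
    have hsum : ((-j : Zp l).val + j.val) % (2 * l + 1) = 0 := by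
      rw [← ZMod.val_add]; simp
    have h : q ^ ((-j : Zp l).val) * q ^ j.val = 1 := by
      rw [← pow_add, ← hpowmod, hsum, pow_zero]
    exact eq_inv_of_mul_eq_one_left h
  have hone : (1 : Zp l) ≠ 0 := one_ne_zero
  have htwo : (2 : Zp l) ≠ 0 := by
    have : ((2 : ℕ) : Zp l) ≠ 0 := by
      rw [Ne, ZMod.natCast_eq_zero_iff]
      intro hdvd
      have := Nat.le_of_dvd (by norm_num) hdvd
      omega
    simpa using this
  -- part 1 : λ → qλ
  have h1 : ∀ lam : ℂ, lam ≠ 0 → (dMat l q tf ff (q * lam)).det = (dMat l q tf ff lam).det := by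
    intro lam _
    have key : dMat l q tf ff (q * lam)
        = (dMat l q tf ff lam).submatrix (Equiv.addRight (1 : Zp l)) (Equiv.addRight (1 : Zp l)) := by
      ext j k
      simp only [dMat, Matrix.submatrix_apply, Matrix.of_apply, Equiv.coe_addRight]
      have hv : q ^ ((j + 1 : Zp l).val) * lam = q ^ j.val * (q * lam) := by
        rw [hval1]; ring
      have c1 : (k + 1 = j + 1) ↔ (k = j) := add_left_inj 1
      have c2 : (k + 1 = j + 1 + 1) ↔ (k = j + 1) := add_left_inj 1
      have c3 : (k + 1 = j + 1 - 1) ↔ (k = j - 1) := by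
        rw [add_sub_cancel_right]
        exact eq_sub_iff_add_eq.symm
      simp only [c1, c2, c3, hv]
    rw [key, Matrix.det_submatrix_equiv_self]
  -- part 2 : λ → 1/λ
  have h2 : ∀ lam : ℂ, lam ≠ 0 → (dMat l q tf ff lam⁻¹).det = (dMat l q tf ff lam).det := by
    intro lam hlam
    have key : dMat l q tf ff lam⁻¹
        = (dMat l q tf ff lam).submatrix (Equiv.neg (Zp l)) (Equiv.neg (Zp l)) := by
      ext j k
      simp only [dMat, Matrix.submatrix_apply, Matrix.of_apply, Equiv.neg_apply]
      have hne : (q : ℂ) ^ j.val * lam⁻¹ ≠ 0 :=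
        mul_ne_zero (pow_ne_zero _ hq0) (inv_ne_zero hlam)
      have e2 : ((q : ℂ) ^ j.val * lam⁻¹)⁻¹ = q ^ ((-j : Zp l).val) * lam := by
        rw [hvalneg, mul_inv, inv_inv]
      have e1 : tf ((q : ℂ) ^ j.val * lam⁻¹) = tf (q ^ ((-j : Zp l).val) * lam) := by
        rw [← e2, htf _ hne]
      have e3 : (q : ℂ) ^ j.val * lam⁻¹ = (q ^ ((-j : Zp l).val) * lam)⁻¹ := by
        rw [← e2, inv_inv]
      have hne1 : (j + 1 : Zp l) ≠ j := by
        intro h; apply hone; linear_combination h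
      have hne2 : (j - 1 : Zp l) ≠ j := by
        intro h; apply hone; linear_combination -h
      have hne3 : (j + 1 : Zp l) ≠ j - 1 := by
        intro h; apply htwo; linear_combination h
      by_cases hkj : k = j
      · subst hkj
        rw [if_pos rfl, if_pos rfl, e1]
      · by_cases hk1 : k = j + 1
        · subst hk1
          have r1 : ¬(-(j + 1) : Zp l) = -j := fun h => hne1 (neg_inj.mp h)
          have r2 : ¬(-(j + 1) : Zp l) = -j + 1 := by
            intro h; apply hne3
            exact neg_inj.mp (h.trans (by ring : (-j + 1 : Zp l) = -(j - 1)))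
          have r3 : (-(j + 1) : Zp l) = -j - 1 := by ring
          rw [if_neg hne1, if_pos rfl, if_neg r1, if_neg r2, if_pos r3, e2]
        · by_cases hk2 : k = j - 1
          · subst hk2
            have r1 : ¬(-(j - 1) : Zp l) = -j := fun h => hne2 (neg_inj.mp h)
            have r2 : (-(j - 1) : Zp l) = -j + 1 := by ring
            rw [if_neg hne2, if_neg (fun h => hne3 h.symm), if_pos rfl, if_neg r1,
              if_pos r2, e3]
          · have r1 : ¬(-k : Zp l) = -j := fun h => hkj (neg_inj.mp h)
            have r2 : ¬(-k : Zp l) = -j + 1 := by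
              intro h; apply hk2; rw [← neg_inj, h]; ring
            have r3 : ¬(-k : Zp l) = -j - 1 := by
              intro h; apply hk1; rw [← neg_inj, h]; ring
            rw [if_neg hkj, if_neg hk1, if_neg hk2, if_neg r1, if_neg r2, if_neg r3]
    rw [key, Matrix.det_submatrix_equiv_self]
  refine ⟨h1, h2, ?_⟩
  -- iterate part 1
  have hiter : ∀ (i : ℕ) (mu : ℂ), mu ≠ 0 →
      (dMat l q tf ff (q ^ i * mu)).det = (dMat l q tf ff mu).det := by
    intro i
    induction i with
    | zero => intro mu hmu; simp
    | succ n ih =>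
      intro mu hmu
      have h : (q : ℂ) ^ (n + 1) * mu = q * (q ^ n * mu) := by ring
      rw [h, h1 _ (mul_ne_zero (pow_ne_zero _ hq0) hmu), ih mu hmu]
  have main : ∀ lam mu : ℂ, lam ≠ 0 → mu ≠ 0 → lam ^ (2 * l + 1) = mu ^ (2 * l + 1) →
      (dMat l q tf ff lam).det = (dMat l q tf ff mu).det := by
    intro lam mu hlam hmu h
    have hroot : (lam / mu) ^ (2 * l + 1) = 1 := by
      rw [div_pow, h, div_self (pow_ne_zero _ hmu)]
    obtain ⟨i, _, hqi⟩ := hq.eq_pow_of_pow_eq_one hroot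
    have hlm : lam = q ^ i * mu := by
      rw [hqi, div_mul_cancel₀ _ hmu]
    rw [hlm, hiter i mu hmu]
  intro lam mu hlam hmu hc
  rcases hc with h | h
  · exact main lam mu hlam hmu h
  · have h' : lam ^ (2 * l + 1) = (mu⁻¹) ^ (2 * l + 1) := by
      rw [inv_pow, h]
    rw [main lam mu⁻¹ hlam (inv_ne_zero hmu) h', h2 mu hmu]


end SixV
end
end

section
/- (Reduction to the spin-s XXZ chain at a root of unity.) Let p = 2s+1 ≥ 3 be odd, q ∈ ℂ a primitive p-th root of unity with fixed square root q^{1/2}, and on ℂ^p let u, v be the shift and clock matrices (v|k⟩ = q^k|k⟩, u|k⟩ = |k−1⟩, k ∈ ℤ/pℤ). Identify the canonical basis ē_1,…,ē_p of ℂ^p with the v-eigenbasis by ē_{a+1} = |p−a⟩ for a = 0,…,p−1, and let S^z, S^+, S^− be the spin-s matrices: S^z ē_{a+1} = (2s−2a) ē_{a+1}, S^+ ē_{a+1} = f(a) ē_a, S^− ē_a = f(a) ē_{a+1} (1 ≤ a ≤ 2s) with f(j) = i(q^j − q^{−j})/2. Then: (i) S^+ = u^{−1}(v − v^{−1})/(2i);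 (ii) S^− = u(q^{−1}v − q v^{−1})/(2i); (iii) v = q^{(S^z+p+1)/2} (the diagonal matrix with entries q^{(2s−2a+p+1)/2} on ē_{a+1}); and (iv) the XXZ Lax matrix L^{XXZ}(λ), with entries L^{XXZ}₁₁ = (λ q^{s+S^z/2} − λ^{−1} q^{−s−S^z/2})/2, L^{XXZ}₁₂ = S^−, L^{XXZ}₂₁ = S^+, L^{XXZ}₂₂ = (λ q^{s−S^z/2} − λ^{−1} q^{−s+S^z/2})/2 (where q^{±S^z/2} is diagonal with entries q^{±(s−a)} on ē_{a+1}), equals the Bazhanov–Stroganov Lax operator L(λ/q) with parameters α = β = 1/2, a = c = q^{−1/2}/(2i), b = d = i q^{1/2}/2. -/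
open Matrix Polynomial Filter Topology

noncomputable section

namespace SixV

/-- the spin-`s` operator `S^z` (with `s = l`), in the `v`-eigenbasis
`ē_{a+1} = |p - a⟩` -/
def SzM (l : ℕ) : Matrix (Zp l) (Zp l) ℂ :=
  Matrix.diagonal fun k => 2 * (l : ℂ) - 2 * (((-k : Zp l).val : ℕ) : ℂ)

/-- `f(j) = i (q^j - q^{-j})/2` -/
def fXXZ (q : ℂ) (j : ℕ) : ℂ := Complex.I * (q ^ j - (q ^ j)⁻¹) / 2

/-- the spin-`s` raising operator `S^+`: `S^+ ē_{a+1} = f(a) ē_a` -/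
def SpM (l : ℕ) (q : ℂ) : Matrix (Zp l) (Zp l) ℂ :=
  Matrix.of fun jj k => if jj = k + 1 then fXXZ q ((-k : Zp l).val) else 0

/-- the spin-`s` lowering operator `S^-`: `S^- ē_a = f(a) ē_{a+1}` -/
def SmM (l : ℕ) (q : ℂ) : Matrix (Zp l) (Zp l) ℂ :=
  Matrix.of fun jj k => if jj = k - 1 then fXXZ q ((1 - k : Zp l).val) else 0

/-- the Lax matrix of the spin-`s` XXZ chain, `s = l`, `p = 2s+1 = 2l+1`;
`q^{±S^z/2}` is diagonal with entries `q^{±(s-a)}` on `ē_{a+1}`. -/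
def laxXXZ (l : ℕ) (q lam : ℂ) : Matrix (Fin 2) (Fin 2) (Matrix (Zp l) (Zp l) ℂ) :=
  Matrix.of
    ![![Matrix.diagonal fun k =>
          (lam * q ^ (2 * (l : ℤ) - (((-k : Zp l).val : ℕ) : ℤ)) -
            lam⁻¹ * q ^ (-(2 * (l : ℤ) - (((-k : Zp l).val : ℕ) : ℤ)))) / 2,
        SmM l q],
      ![SpM l q,
        Matrix.diagonal fun k =>
          (lam * q ^ ((((-k : Zp l).val : ℕ) : ℤ)) -
            lam⁻¹ * q ^ (-(((-k : Zp l).val : ℕ) : ℤ))) / 2]]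

/-- reduction to the spin-`s` XXZ chain at a root of unity:
the spin matrices are expressed through the Weyl algebra generators `u, v`, and
the XXZ Lax matrix equals the Bazhanov–Stroganov Lax operator `L(λ/q)` with the
indicated parameters. -/
theorem XXZ_reduction (l : ℕ) (hl : 1 ≤ l) (q s : ℂ)
    (hq : IsPrimitiveRoot q (2 * l + 1)) (hs : s ^ 2 = q) :
    SpM l q = (2 * Complex.I)⁻¹ • (uMinv l * (vM l q - vMinv l q)) ∧
    SmM l q = (2 * Complex.I)⁻¹ • (uM l * (q⁻¹ • vM l q - q • vMinv l q)) ∧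
    vM l q = Matrix.diagonal (fun k =>
      q ^ ((2 * (l : ℤ) - 2 * (((-k : Zp l).val : ℕ) : ℤ) + (2 * (l : ℤ) + 1) + 1) / 2)) ∧
    (∀ lam : ℂ, lam ≠ 0 →
      laxXXZ l q lam =
        laxM l q s (1 / 2) (1 / 2) ((2 * Complex.I * s)⁻¹) (Complex.I * s / 2)
          ((2 * Complex.I * s)⁻¹) (Complex.I * s / 2) (lam / q)) := by
  have hp3 : 1 < 2 * l + 1 := by omega
  haveI : Fact (1 < 2 * l + 1) := ⟨hp3⟩
  have hqp : q ^ (2 * l + 1) = 1 := hq.pow_eq_one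
  have hq0 : q ≠ 0 := by
    intro h
    rw [h, zero_pow (by omega : 2 * l + 1 ≠ 0)] at hqp
    exact one_ne_zero hqp.symm
  have hs0 : s ≠ 0 := by
    intro h
    rw [h] at hs
    exact hq0 (by simpa using hs.symm)
  have hI := Complex.I_ne_zero
  have hII : Complex.I ^ 2 = -1 := Complex.I_sq
  have h2I : (2 * Complex.I)⁻¹ = -Complex.I / 2 := by
    rw [mul_inv, Complex.inv_I]
    ring
  have hmod : ∀ n : ℕ, q ^ n = q ^ (n % (2 * l + 1)) := by
    intro n
    conv_lhs => rw [← Nat.mod_add_div n (2 * l + 1)]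
    rw [pow_add, pow_mul, hqp, one_pow, mul_one]
  have hadd : ∀ m n : Zp l, q ^ (m + n).val = q ^ m.val * q ^ n.val := by
    intro m n
    rw [ZMod.val_add, ← hmod, pow_add]
  have hinv : ∀ k : Zp l, q ^ (-k).val = (q ^ k.val)⁻¹ := by
    intro k
    refine eq_inv_of_mul_eq_one_left ?_
    rw [← hadd, neg_add_cancel]
    simp
  have hz : ∀ m : ℤ, q ^ m = q ^ (m + (2 * (l : ℤ) + 1)) := by
    intro m
    rw [zpow_add₀ hq0,
      show (2 * (l : ℤ) + 1) = ((2 * l + 1 : ℕ) : ℤ) by push_cast; ring,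
      zpow_natCast, hqp, mul_one]
  have hk1 : ∀ k : Zp l, q ^ ((1 - k : Zp l)).val = q * (q ^ k.val)⁻¹ := by
    intro k
    rw [show (1 - k : Zp l) = 1 + (-k) by ring, hadd, ZMod.val_one, pow_one, hinv]
  have hSp : SpM l q = (2 * Complex.I)⁻¹ • (uMinv l * (vM l q - vMinv l q)) := by
    ext j k
    simp only [SpM, uMinv, vM, vMinv, Matrix.smul_apply, Matrix.of_apply,
      Matrix.sub_apply, Matrix.mul_apply, Matrix.diagonal_apply, smul_eq_mul]
    rw [Finset.sum_eq_single k]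
    · by_cases h : j = k + 1
      · rw [if_pos h, if_pos h, if_pos rfl, if_pos rfl, one_mul]
        simp only [fXXZ, hinv k, inv_inv, h2I]
        ring
      · simp [h]
    · intro b _ hb
      simp [hb]
    · simp
  have hSm : SmM l q = (2 * Complex.I)⁻¹ • (uM l * (q⁻¹ • vM l q - q • vMinv l q)) := by
    ext j k
    simp only [SmM, uM, vM, vMinv, Matrix.smul_apply, Matrix.of_apply, Matrix.add_apply,
      Matrix.sub_apply, Matrix.mul_apply, Matrix.diagonal_apply, smul_eq_mul]
    rw [Finset.sum_eq_single k]
    · by_cases h : j = k - 1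
      · rw [if_pos h, if_pos h, if_pos rfl, if_pos rfl, one_mul]
        simp only [fXXZ, hk1 k, mul_inv, inv_inv, h2I]
        ring
      · simp [h]
    · intro b _ hb
      simp [hb]
    · simp
  refine ⟨hSp, hSm, ?_, ?_⟩
  · rw [show vM l q = Matrix.diagonal (fun k => q ^ k.val) from rfl]
    refine congrArg Matrix.diagonal (funext fun k => ?_)
    have hdiv : (2 * (l : ℤ) - 2 * (((-k : Zp l).val : ℕ) : ℤ) + (2 * (l : ℤ) + 1) + 1) / 2
        = -(((-k : Zp l).val : ℤ)) + (2 * (l : ℤ) + 1) := by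
      have := ZMod.val_lt (-k : Zp l)
      omega
    rw [hdiv, ← hz, _root_.zpow_neg, zpow_natCast, hinv, inv_inv]
  · intro lam hlam
    refine Matrix.ext fun i j => ?_
    fin_cases i <;> fin_cases j
    · -- (0,0)
      show (laxXXZ l q lam 0 0) = laxM l q s (1 / 2) (1 / 2) ((2 * Complex.I * s)⁻¹)
        (Complex.I * s / 2) ((2 * Complex.I * s)⁻¹) (Complex.I * s / 2) (lam / q) 0 0
      ext j k
      show Matrix.diagonal (fun k : Zp l =>
          (lam * q ^ (2 * (l : ℤ) - (((-k : Zp l).val : ℕ) : ℤ)) -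
            lam⁻¹ * q ^ (-(2 * (l : ℤ) - (((-k : Zp l).val : ℕ) : ℤ)))) / 2) j k
        = ((lam / q * (1 / 2)) • vM l q - (1 / 2 / (lam / q)) • vMinv l q) j k
      simp only [vM, vMinv, Matrix.sub_apply, Matrix.smul_apply,
        Matrix.diagonal_apply, smul_eq_mul]
      by_cases h : j = k
      · subst h
        simp only [if_pos rfl, eq_self_iff_true, if_true]
        set a : ℤ := (((-j : Zp l).val : ℕ) : ℤ) with ha
        have hA' : q ^ a = (q ^ j.val)⁻¹ := by rw [ha, zpow_natCast, hinv]
        have e1 : q ^ (2 * (l : ℤ) - a) = q⁻¹ * q ^ j.val := by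
          rw [show 2 * (l : ℤ) - a = (-1 - a) + (2 * (l : ℤ) + 1) by ring, ← hz,
            show (-1 - a : ℤ) = (-1) + (-a) by ring, zpow_add₀ hq0, _root_.zpow_neg_one,
            _root_.zpow_neg, hA', inv_inv]
        have e2 : q ^ (-(2 * (l : ℤ) - a)) = q * (q ^ j.val)⁻¹ := by
          rw [hz (-(2 * (l : ℤ) - a)),
            show -(2 * (l : ℤ) - a) + (2 * (l : ℤ) + 1) = 1 + a by ring,
            zpow_add₀ hq0, zpow_one, hA']
        rw [e1, e2]
        have hk0 : q ^ j.val ≠ 0 := pow_ne_zero _ hq0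
        field_simp
      · simp [h]
    · -- (0,1)
      show SmM l q = uM l * (((2 * Complex.I * s)⁻¹ / s) • vM l q
        + (s * (Complex.I * s / 2)) • vMinv l q)
      have c1 : (2 * Complex.I * s)⁻¹ / s = (2 * Complex.I)⁻¹ * q⁻¹ := by
        rw [← hs]
        field_simp
      have c2 : s * (Complex.I * s / 2) = -((2 * Complex.I)⁻¹ * q) := by
        rw [← hs, h2I]
        ring
      rw [hSm, c1, c2,
        show ((2 * Complex.I)⁻¹ * q⁻¹) • vM l q + (-((2 * Complex.I)⁻¹ * q)) • vMinv l q
            = (2 * Complex.I)⁻¹ • (q⁻¹ • vM l q - q • vMinv l q) by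
          rw [smul_sub, smul_smul, smul_smul, sub_eq_add_neg, ← neg_smul],
        Matrix.mul_smul]
    · -- (1,0)
      show SpM l q = uMinv l * ((s * (2 * Complex.I * s)⁻¹) • vM l q
        + (Complex.I * s / 2 / s) • vMinv l q)
      have c3 : s * (2 * Complex.I * s)⁻¹ = (2 * Complex.I)⁻¹ := by
        field_simp
      have c4 : Complex.I * s / 2 / s = -(2 * Complex.I)⁻¹ := by
        rw [h2I]
        field_simp
      rw [hSp, c3, c4,
        show (2 * Complex.I)⁻¹ • vM l q + (-(2 * Complex.I)⁻¹) • vMinv l q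
            = (2 * Complex.I)⁻¹ • (vM l q - vMinv l q) by
          rw [smul_sub, sub_eq_add_neg, ← neg_smul],
        Matrix.mul_smul]
    · -- (1,1)
      show (laxXXZ l q lam 1 1) = laxM l q s (1 / 2) (1 / 2) ((2 * Complex.I * s)⁻¹)
        (Complex.I * s / 2) ((2 * Complex.I * s)⁻¹) (Complex.I * s / 2) (lam / q) 1 1
      have c5 : (2 * Complex.I * s)⁻¹ * (2 * Complex.I * s)⁻¹ / (1 / 2) / (lam / q)
          = -(1 / (2 * lam)) := by
        rw [← mul_inv,
          show (2 * Complex.I * s) * (2 * Complex.I * s) = -(4 * q) by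
            rw [← hs]; linear_combination (4 * s ^ 2 : ℂ) * hII]
        field_simp
        ring
      have c6 : Complex.I * s / 2 * (Complex.I * s / 2) / (1 / 2) * (lam / q)
          = -(lam / 2) := by
        rw [show Complex.I * s / 2 * (Complex.I * s / 2) = -(q / 4) by
          rw [← hs]; linear_combination (s ^ 2 / 4 : ℂ) * hII]
        field_simp
        ring
      ext j k
      show Matrix.diagonal (fun k : Zp l =>
          (lam * q ^ ((((-k : Zp l).val : ℕ) : ℤ)) -
            lam⁻¹ * q ^ (-(((-k : Zp l).val : ℕ) : ℤ))) / 2) j k =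
        (((2 * Complex.I * s)⁻¹ * (2 * Complex.I * s)⁻¹ / (1 / 2) / (lam / q)) • vM l q
          - (Complex.I * s / 2 * (Complex.I * s / 2) / (1 / 2) * (lam / q)) • vMinv l q) j k
      simp only [vM, vMinv, Matrix.sub_apply, Matrix.smul_apply,
        Matrix.diagonal_apply, smul_eq_mul]
      by_cases h : j = k
      · subst h
        simp only [if_pos rfl, eq_self_iff_true, if_true]
        set a : ℤ := (((-j : Zp l).val : ℕ) : ℤ) with ha
        have hA' : q ^ a = (q ^ j.val)⁻¹ := by rw [ha, zpow_natCast, hinv]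
        have hA : q ^ (-a) = q ^ j.val := by rw [_root_.zpow_neg, hA', inv_inv]
        rw [hA, hA', c5, c6]
        have hk0 : q ^ j.val ≠ 0 := pow_ne_zero _ hq0
        field_simp
        ring
      · simp [h]

end SixV
end
end
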